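/- arXiv:2407.18122 — 3 statements merged into one kernel-verified Lean document; each statement's English description precedes it below -/
import Mathlib

section
/- Let k, n, t, m be integers with 3 ≤ m < 2^t and 2 ≤ n < 2^k. Suppose there exists a (2^k, 2^t; n, m)-de Bruijn array code of size Δ in which every column of every codeword has odd weight, and suppose there exists a span m half de Bruijn sequence. Then there exists a (2^{k+1}, 2^{m+t−1}; n + 1, m)-de Bruijn array code of size Δ. -/
/-- `C` is an `(r, s; n, m)`-de Bruijn array code of size `Δ`: every `n × m` binary
matrix appears exactly once as a window in exactly one codeword. -/
def IsDBAC (r s n m Δ : ℕ) (C : Fin Δ → (ZMod r × ZMod s → ZMod 2)) : Prop :=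
  ∀ M : Fin n → Fin m → ZMod 2,
    ∃! p : Fin Δ × ZMod r × ZMod s,
      ∀ (x : Fin n) (y : Fin m),
        C p.1 (p.2.1 + (x : ℕ), p.2.2 + (y : ℕ)) = M x y

/-- The weight of the `j`-th column of a doubly-periodic array `A`. -/
noncomputable def colWeight {r s : ℕ} (A : ZMod r × ZMod s → ZMod 2) (j : ZMod s) : ℕ :=
  {i : ZMod r | A (i, j) = 1}.ncard

/-- A span `m` half de Bruijn sequence: a binary cyclic sequence of length `2^(m-1)`
such that each binary `m`-tuple appears exactly once, up to complementation. -/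
def IsHalfDeBruijn (m : ℕ) (s : ZMod (2 ^ (m - 1)) → ZMod 2) : Prop :=
  ∀ x : Fin m → ZMod 2,
    ∃! p : ZMod (2 ^ (m - 1)) × ZMod 2,
      ∀ i : Fin m, s (p.1 + (i : ℕ)) = x i + p.2



lemma zmod2_cases : ∀ x : ZMod 2, x = 0 ∨ x = 1 := by decide

lemma zmod2_add_self : ∀ x : ZMod 2, x + x = 0 := by decide

lemma sum_range_zmod {N : ℕ} [NeZero N] {M : Type*} [AddCommMonoid M] (f : ZMod N → M) :
    ∑ u ∈ Finset.range N, f (u : ZMod N) = ∑ z : ZMod N, f z := by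
  refine Finset.sum_nbij' (fun u => (u : ZMod N)) (fun z => z.val) ?_ ?_ ?_ ?_ ?_
  · intro a _; exact Finset.mem_univ _
  · intro z _; exact Finset.mem_range.mpr (ZMod.val_lt z)
  · intro a ha; exact ZMod.val_natCast_of_lt (Finset.mem_range.mp ha)
  · intro z _; exact ZMod.natCast_rightInverse z
  · intro a _; rfl

lemma sum_shift_zmod {N : ℕ} [NeZero N] {M : Type*} [AddCommMonoid M] (f : ZMod N → M)
    (a : ZMod N) : ∑ z : ZMod N, f (a + z) = ∑ z : ZMod N, f z :=
  Fintype.sum_equiv (Equiv.addLeft a) _ _ (fun _ => rfl)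

lemma sum_range_shift {N : ℕ} [NeZero N] {M : Type*} [AddCommMonoid M] (f : ZMod N → M)
    (a : ZMod N) : ∑ u ∈ Finset.range N, f (a + (u : ZMod N)) = ∑ z : ZMod N, f z := by
  rw [sum_range_zmod (fun z => f (a + z)), sum_shift_zmod]

lemma sum_range_shift_nat {N : ℕ} [NeZero N] {M : Type*} [AddCommMonoid M] (g : ℕ → M)
    (hper : ∀ z : ℕ, g (z % N) = g z) (z : ℕ) :
    ∑ u ∈ Finset.range N, g (z + u) = ∑ u ∈ Finset.range N, g u := by
  have h1 : ∀ u : ℕ, g u = g ((u : ZMod N)).val := by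
    intro u
    rw [ZMod.val_natCast, hper]
  calc ∑ u ∈ Finset.range N, g (z + u)
      = ∑ u ∈ Finset.range N, (fun w : ZMod N => g w.val) ((z : ZMod N) + (u : ZMod N)) := by
        refine Finset.sum_congr rfl fun u _ => ?_
        show g (z + u) = g (((z : ZMod N) + (u : ZMod N)).val)
        rw [← Nat.cast_add]
        exact h1 (z + u)
    _ = ∑ w : ZMod N, (fun w : ZMod N => g w.val) w := by
        exact sum_range_shift (fun w : ZMod N => g w.val) ((z : ℕ) : ZMod N)
    _ = ∑ u ∈ Finset.range N, (fun w : ZMod N => g w.val) (u : ZMod N) :=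
        (sum_range_zmod _).symm
    _ = ∑ u ∈ Finset.range N, g u := Finset.sum_congr rfl fun u _ => (h1 u).symm

lemma sum_eq_card_filter {α : Type*} [Fintype α] (f : α → ZMod 2) :
    ∑ z : α, f z = ((Finset.univ.filter (fun z => f z = 1)).card : ZMod 2) := by
  classical
  rw [← Finset.sum_boole]
  apply Finset.sum_congr rfl
  intro z _
  rcases zmod2_cases (f z) with h | h <;> simp [h]

/-- Sawtooth index map: `u - D * (u / 2^t)` computed in `ZMod L`. -/
def Fz (L t D : ℕ) (u : ℕ) : ZMod L :=
  (u : ZMod L) - (D : ZMod L) * ((u / 2^t : ℕ) : ZMod L)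

lemma Fz_add_period {L t D S : ℕ} [NeZero L] (hS : S = 2^t * L) (u : ℕ) :
    Fz L t D (u + S) = Fz L t D u := by
  have hT : 0 < 2^t := pow_pos (by norm_num) t
  have hdiv : (u + S) / 2^t = u / 2^t + L := by
    rw [hS]; exact Nat.add_mul_div_left u L hT
  unfold Fz
  rw [hdiv, hS]
  push_cast [ZMod.natCast_self]
  ring

lemma Fz_add_mul_period {L t D S : ℕ} [NeZero L] (hS : S = 2^t * L) (u q : ℕ) :
    Fz L t D (u + S * q) = Fz L t D u := by
  induction q with
  | zero => simp
  | succ q ih =>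
      have : u + S * (q + 1) = (u + S * q) + S := by ring
      rw [this, Fz_add_period hS, ih]

lemma Fz_mod {L t D S : ℕ} [NeZero L] (hS : S = 2^t * L) (u : ℕ) :
    Fz L t D (u % S) = Fz L t D u := by
  conv_rhs => rw [← Nat.mod_add_div u S]
  rw [Fz_add_mul_period hS]

lemma val_add_natCast {S : ℕ} [NeZero S] (J : ZMod S) (c : ℕ) :
    (J + (c : ZMod S)).val = (J.val + c) % S := by
  simp [ZMod.val_add, ZMod.val_natCast, Nat.add_mod]

lemma core {E : Type*} (S L t Y : ℕ) [NeZero L] (hS : S = 2^t * L)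
    (hY1 : 0 < Y) (hYlt : Y < 2^t)
    (hcop : Nat.Coprime (2^t - Y) L)
    (θ : ZMod L → ZMod 2) (φ : E → ZMod 2)
    (horacle : ∀ x : Fin Y → ZMod 2, ∃! q : ZMod L × E,
        ∀ i : Fin Y, θ (q.1 + ((i : ℕ) : ZMod L)) = x i + φ q.2)
    (j0 : ZMod (2^t)) (x : Fin Y → ZMod 2) :
    ∃! q : ZMod S × E, ((q.1.val : ZMod (2^t)) = j0) ∧
      ∀ y : Fin Y, θ (Fz L t Y (q.1.val + (y : ℕ))) = x y + φ q.2 := by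
  have hT : 0 < 2^t := pow_pos (by norm_num) t
  have hL : 0 < L := NeZero.pos L
  haveI : NeZero S := ⟨by rw [hS]; exact (Nat.mul_pos hT hL).ne'⟩
  haveI : NeZero (2^t) := ⟨hT.ne'⟩
  set r := j0.val with hr_def
  have hr : r < 2^t := ZMod.val_lt j0
  set s := min Y (2^t - r) with hs_def
  have hsY : s ≤ Y := min_le_left _ _
  have hclsmod : ∀ J : ZMod S, ((J.val : ZMod (2^t)) = j0) → J.val % 2^t = r := by
    intro J h
    have := congrArg ZMod.val h
    rwa [ZMod.val_natCast] at this
  have hmodcls : ∀ J : ZMod S, J.val % 2^t = r → ((J.val : ZMod (2^t)) = j0) := by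
    intro J h
    rw [← ZMod.natCast_mod, h, hr_def]
    exact ZMod.natCast_rightInverse j0
  -- step formula for Fz along a window
  have hFzstep : ∀ u, u % 2^t = r → ∀ y : ℕ, y < Y →
      Fz L t Y (u + y) = Fz L t Y u + (y : ZMod L)
        - (if 2^t ≤ r + y then (Y : ZMod L) else 0) := by
    intro u hu y hy
    have hd := Nat.div_add_mod u (2^t)
    have hdiv : (u + y) / 2^t = u / 2^t + (r + y) / 2^t := by
      conv_lhs => rw [show u + y = 2^t * (u / 2^t) + (r + y) by omega]
      rw [Nat.mul_add_div hT]
    by_cases hc : 2^t ≤ r + y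
    · have h1 : (r + y) / 2^t = 1 :=
        Nat.div_eq_of_lt_le (by omega) (by omega)
      simp only [Fz, hdiv, h1, if_pos hc]
      push_cast
      ring
    · have h0 : (r + y) / 2^t = 0 := Nat.div_eq_of_lt (by omega)
      simp only [Fz, hdiv, h0, if_neg hc]
      push_cast
      ring
  -- the rotation
  set τf : Fin Y → Fin Y := fun y =>
    have hy := y.is_lt
    if h : (y : ℕ) < s then ⟨(y : ℕ) + (Y - s), by omega⟩ else ⟨(y : ℕ) - s, by omega⟩
    with hτf_def
  set c0 : ZMod L := ((s : ℕ) : ZMod L) - ((Y : ℕ) : ZMod L) with hc0_def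
  have hwin : ∀ J : ZMod S, J.val % 2^t = r → ∀ y : Fin Y,
      Fz L t Y (J.val + (y : ℕ)) = (Fz L t Y J.val + c0) + (((τf y : Fin Y) : ℕ) : ZMod L) := by
    intro J hJ y
    rw [hFzstep _ hJ _ y.is_lt]
    by_cases h : (y : ℕ) < s
    · rw [if_neg (by omega)]
      have hτ : ((τf y : Fin Y) : ℕ) = (y : ℕ) + (Y - s) := by simp [hτf_def, h]
      rw [hτ, hc0_def]
      push_cast [Nat.cast_sub hsY]
      ring
    · have hsy : s ≤ (y : ℕ) := Nat.le_of_not_lt h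
      have hylt := y.is_lt
      rw [if_pos (by omega)]
      have hτ : ((τf y : Fin Y) : ℕ) = (y : ℕ) - s := by simp [hτf_def, h]
      rw [hτ, hc0_def]
      push_cast [Nat.cast_sub hsy, Nat.cast_sub hsY]
      ring
  have hτinj : Function.Injective τf := by
    intro a b hab
    have ha := a.is_lt
    have hb := b.is_lt
    by_cases h1 : (a : ℕ) < s <;> by_cases h2 : (b : ℕ) < s <;>
      simp [hτf_def, h1, h2, Fin.ext_iff] at hab ⊢ <;> omega
  haveI : NeZero Y := ⟨hY1.ne'⟩
  set τe : Fin Y ≃ Fin Y := Equiv.ofBijective τf (Finite.injective_iff_bijective.mp hτinj)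
    with hτe_def
  have hτe_app : ∀ y, τe y = τf y := fun y => rfl
  set x' : Fin Y → ZMod 2 := fun i => x (τe.symm i) with hx'_def
  obtain ⟨⟨w0, e0⟩, hor1, hor2⟩ := horacle x'
  have hcond : ∀ (J : ZMod S) (e : E), J.val % 2^t = r →
      ((∀ y : Fin Y, θ (Fz L t Y (J.val + (y : ℕ))) = x y + φ e) ↔
       (∀ i : Fin Y, θ ((Fz L t Y J.val + c0) + ((i : ℕ) : ZMod L)) = x' i + φ e)) := by
    intro J e hJ
    constructor
    · intro h i
      have h2 := h (τe.symm i)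
      rw [hwin J hJ (τe.symm i)] at h2
      rw [← hτe_app, Equiv.apply_symm_apply] at h2
      exact h2
    · intro h y
      rw [hwin J hJ y]
      have h2 := h (τe y)
      rw [hx'_def] at h2
      simp only [Equiv.symm_apply_apply] at h2
      rw [hτe_app] at h2
      exact h2
  -- parametrization of the fiber
  set β : (ZMod L)ˣ := ZMod.unitOfCoprime (2^t - Y) hcop with hβ_def
  have hβcoe : (β : ZMod L) = ((2^t - Y : ℕ) : ZMod L) := ZMod.coe_unitOfCoprime _ _
  have hFzJ : ∀ J : ZMod S, J.val % 2^t = r →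
      Fz L t Y J.val = (r : ZMod L) + (β : ZMod L) * ((J.val / 2^t : ℕ) : ZMod L) := by
    intro J hJ
    obtain ⟨q, hq⟩ : ∃ q, q = J.val / 2^t := ⟨_, rfl⟩
    have hd : J.val = 2^t * q + r := by
      rw [hq]
      have := Nat.div_add_mod J.val (2^t)
      omega
    show (J.val : ZMod L) - ((Y : ℕ) : ZMod L) * ((J.val / 2^t : ℕ) : ZMod L) = _
    rw [← hq, hd, hβcoe]
    push_cast [Nat.cast_sub (le_of_lt hYlt)]
    ring
  have hdivlt : ∀ J : ZMod S, J.val / 2^t < L := by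
    intro J
    have h1 : J.val < 2^t * L := by
      have := ZMod.val_lt J
      omega
    exact Nat.div_lt_of_lt_mul h1
  have hJdet : ∀ J J' : ZMod S, J.val % 2^t = r → J'.val % 2^t = r →
      Fz L t Y J.val = Fz L t Y J'.val → J = J' := by
    intro J J' h h' heq
    rw [hFzJ J h, hFzJ J' h'] at heq
    have h2 : ((J.val / 2^t : ℕ) : ZMod L) = ((J'.val / 2^t : ℕ) : ZMod L) :=
      (Units.mul_right_inj β).mp (add_left_cancel heq)
    have h4 : J.val / 2^t = J'.val / 2^t := by
      have := congrArg ZMod.val h2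
      rwa [ZMod.val_natCast_of_lt (hdivlt J), ZMod.val_natCast_of_lt (hdivlt J')] at this
    apply ZMod.val_injective
    have d1 := Nat.div_add_mod J.val (2^t)
    have d2 := Nat.div_add_mod J'.val (2^t)
    rw [h] at d1
    rw [h'] at d2
    rw [h4] at d1
    exact d1.symm.trans d2
  -- the witness
  set a0 : ZMod L := ((β⁻¹ : (ZMod L)ˣ) : ZMod L) * (w0 - c0 - (r : ZMod L)) with ha0_def
  set J0 : ZMod S := ((r + 2^t * a0.val : ℕ) : ZMod S) with hJ0_def
  have hJ0val : J0.val = r + 2^t * a0.val := by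
    apply ZMod.val_natCast_of_lt
    have h1 : a0.val < L := ZMod.val_lt a0
    calc r + 2^t * a0.val < 2^t + 2^t * a0.val := by omega
    _ = 2^t * (a0.val + 1) := by ring
    _ ≤ 2^t * L := Nat.mul_le_mul_left _ (by omega)
    _ = S := hS.symm
  have hJ0mod : J0.val % 2^t = r := by
    rw [hJ0val, Nat.add_mul_mod_self_left]
    exact Nat.mod_eq_of_lt hr
  have hJ0div : J0.val / 2^t = a0.val := by
    rw [hJ0val, Nat.add_mul_div_left _ _ hT, Nat.div_eq_of_lt hr, zero_add]
  have hFzJ0 : Fz L t Y J0.val + c0 = w0 := by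
    rw [hFzJ J0 hJ0mod, hJ0div, ZMod.natCast_rightInverse a0, ha0_def,
      Units.mul_inv_cancel_left]
    ring
  refine ⟨⟨J0, e0⟩, ⟨hmodcls J0 hJ0mod, ?_⟩, ?_⟩
  · apply (hcond J0 e0 hJ0mod).mpr
    intro i
    rw [hFzJ0]
    exact hor1 i
  · rintro ⟨J, e⟩ ⟨hc, hw⟩
    have hmod := hclsmod J hc
    have hsat := (hcond J e hmod).mp hw
    have huq := hor2 (Fz L t Y J.val + c0, e) hsat
    have h1 : Fz L t Y J.val + c0 = w0 := congrArg Prod.fst huq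
    have h2 : e = e0 := congrArg Prod.snd huq
    have hJ : J = J0 := by
      apply hJdet J J0 hmod hJ0mod
      rw [← hFzJ0] at h1
      exact add_right_cancel h1
    rw [hJ, h2]

lemma deriv_deBruijn (m : ℕ) (hm : 3 ≤ m) (σ : ZMod (2^(m-1)) → ZMod 2)
    (hσ : IsHalfDeBruijn m σ) :
    ∀ d : Fin (m-1) → ZMod 2, ∃! w : ZMod (2^(m-1)),
      ∀ i : Fin (m-1),
        σ (w + ((i : ℕ) : ZMod (2^(m-1))) + 1) + σ (w + ((i : ℕ) : ZMod (2^(m-1)))) = d i := by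
  intro d
  have k1 : ∀ a b c : ZMod 2, (a + b + c) + (a + c) = b := by decide
  have k2 : ∀ a b c : ZMod 2, a + b = c → a = c + b := by decide
  set d' : ℕ → ZMod 2 := fun u => if h : u < m - 1 then d ⟨u, h⟩ else 0 with hd'
  set x : Fin m → ZMod 2 := fun i => ∑ u ∈ Finset.range i.val, d' u with hx
  obtain ⟨⟨v, e⟩, hsat, huniq⟩ := hσ x
  simp only at hsat
  refine ⟨v, ?_, ?_⟩
  · intro i
    have hi1 : i.val + 1 < m := by have := i.is_lt; omega
    have hi2 : i.val < m := by have := i.is_lt; omega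
    have h1 := hsat ⟨i.val + 1, hi1⟩
    have h2 := hsat ⟨i.val, hi2⟩
    simp only [hx] at h1 h2
    have hx1 : ∑ u ∈ Finset.range (i.val + 1), d' u
        = ∑ u ∈ Finset.range i.val, d' u + d i := by
      rw [Finset.sum_range_succ, hd']
      simp only [dif_pos i.is_lt, Fin.eta]
    rw [hx1] at h1
    have hcast : v + ((i.val + 1 : ℕ) : ZMod (2^(m-1))) = v + ((i.val : ℕ) : ZMod (2^(m-1))) + 1 := by
      push_cast
      ring
    rw [hcast] at h1
    rw [h1, h2]
    exact k1 _ _ _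
  · intro w hw
    have hind : ∀ z (hz : z < m), σ (w + (z : ℕ)) = x ⟨z, hz⟩ + σ w := by
      intro z
      induction z with
      | zero => intro hz; simp [hx]
      | succ z ih =>
          intro hz
          have hz1 : z < m := by omega
          have hz2 : z < m - 1 := by omega
          have hstep := hw ⟨z, hz2⟩
          have hc : ((⟨z, hz2⟩ : Fin (m-1)) : ℕ) = z := rfl
          rw [hc] at hstep
          have := k2 _ _ _ hstep
          have hcast : w + ((z + 1 : ℕ) : ZMod (2^(m-1))) = w + (z : ℕ) + 1 := by
            push_cast
            ring
          rw [hcast, this, ih hz1]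
          have hx2 : x ⟨z + 1, hz⟩ = x ⟨z, hz1⟩ + d' z := by
            simp only [hx]
            exact Finset.sum_range_succ d' z
          rw [hx2, hd']
          simp only [dif_pos hz2]
          ring
    have : (w, σ w) = (v, e) := by
      apply huniq
      intro i
      simp only
      rw [hind i.val i.is_lt, Fin.eta]
    exact congrArg Prod.fst this
lemma exists_good_b (m t : ℕ) (hm : 3 ≤ m) (hmt : m < 2^t)
    (hhalf : ∃ s : ZMod (2 ^ (m - 1)) → ZMod 2, IsHalfDeBruijn m s) :
    ∃ b : ZMod (2^(m+t-1)) → ZMod 2,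
      ∀ (j0 : ZMod (2^t)) (p : Fin m → ZMod 2),
        ∃! q : ZMod (2^(m+t-1)) × ZMod 2,
          ((q.1.val : ZMod (2^t)) = j0) ∧
          ∀ y : Fin m, b (q.1 + ((y : ℕ) : ZMod (2^(m+t-1)))) = p y + q.2 := by
  obtain ⟨σ, hσ⟩ := hhalf
  have hL : 0 < 2^(m-1) := pow_pos (by norm_num) (m-1)
  haveI : NeZero (2^(m-1)) := ⟨hL.ne'⟩
  have hT : 0 < 2^t := pow_pos (by norm_num) t
  have hSpos : 0 < 2^(m+t-1) := pow_pos (by norm_num) (m+t-1)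
  haveI : NeZero (2^(m+t-1)) := ⟨hSpos.ne'⟩
  have hS : (2^(m+t-1) : ℕ) = 2^t * 2^(m-1) := by
    rw [← pow_add]
    congr 1
    omega
  have ht1 : 1 ≤ t := by
    by_contra h
    push_neg at h
    have : t = 0 := by omega
    subst this
    simp at hmt
    omega
  have heven : Even (2^t) := (Nat.even_pow).mpr ⟨even_two, by omega⟩
  by_cases hoddm : Odd m
  · -- odd case : b = σ ∘ Fz
    have hcop : Nat.Coprime (2^t - m) (2^(m-1)) :=
      Nat.Coprime.pow_right _ ((Nat.Even.sub_odd (le_of_lt hmt) heven hoddm).coprime_two_right)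
    have horacle : ∀ x : Fin m → ZMod 2, ∃! q : ZMod (2^(m-1)) × ZMod 2,
        ∀ i : Fin m, σ (q.1 + ((i : ℕ) : ZMod (2^(m-1)))) = x i + id q.2 := fun x => hσ x
    have hcore := core (2^(m+t-1)) (2^(m-1)) t m hS (by omega) hmt hcop σ id horacle
    set b : ZMod (2^(m+t-1)) → ZMod 2 := fun J => σ (Fz (2^(m-1)) t m J.val) with hb
    have hbwin : ∀ (J : ZMod (2^(m+t-1))) (y : ℕ),
        b (J + (y : ZMod (2^(m+t-1)))) = σ (Fz (2^(m-1)) t m (J.val + y)) := by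
      intro J y
      rw [hb]
      simp only
      rw [val_add_natCast, Fz_mod hS]
    refine ⟨b, ?_⟩
    intro j0 p
    obtain ⟨⟨J0, e0⟩, h1, h2⟩ := hcore j0 p
    refine ⟨⟨J0, e0⟩, ⟨h1.1, ?_⟩, ?_⟩
    · intro y
      rw [hbwin]
      exact h1.2 y
    · rintro ⟨J, e⟩ ⟨hc, hw⟩
      refine h2 (J, e) ⟨hc, ?_⟩
      intro y
      rw [← hbwin]
      exact hw y
  · -- even case : b = prefix sums of δ ∘ Fz
    have hoddm' : Odd (m - 1) := by
      rcases Nat.even_or_odd m with h | h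
      · rcases h with ⟨u, hu⟩
        exact ⟨u - 1, by omega⟩
      · exact absurd h hoddm
    have hm'lt : m - 1 < 2^t := by omega
    have hcop : Nat.Coprime (2^t - (m-1)) (2^(m-1)) :=
      Nat.Coprime.pow_right _ ((Nat.Even.sub_odd (by omega) heven hoddm').coprime_two_right)
    set δ : ZMod (2^(m-1)) → ZMod 2 := fun w => σ (w + 1) + σ w with hδ
    have hdB := deriv_deBruijn m hm σ hσ
    have horacle : ∀ x : Fin (m-1) → ZMod 2, ∃! q : ZMod (2^(m-1)) × Unit,
        ∀ i : Fin (m-1), δ (q.1 + ((i : ℕ) : ZMod (2^(m-1)))) = x i + (fun _ => (0 : ZMod 2)) q.2 := by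
      intro x
      obtain ⟨w, hw, hwu⟩ := hdB x
      refine ⟨(w, ()), ?_, ?_⟩
      · intro i
        simp only [hδ, add_zero]
        exact hw i
      · rintro ⟨w', u⟩ h
        have : w' = w := by
          apply hwu
          intro i
          have := h i
          simp only [hδ, add_zero] at this
          exact this
        rw [this]
    have hcore := core (2^(m+t-1)) (2^(m-1)) t (m-1) hS (by omega) hm'lt hcop δ
      (fun _ => (0 : ZMod 2)) horacle
    set g : ℕ → ZMod 2 := fun u => δ (Fz (2^(m-1)) t (m-1) u) with hg
    set B : ℕ → ZMod 2 := fun z => ∑ u ∈ Finset.range z, g u with hB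
    -- total sum over a period is zero
    have hblock : ∀ q v : ℕ, v < 2^t →
        g (2^t * q + v) = δ (((v : ℕ) : ZMod (2^(m-1)))
          + ((2^t - (m-1) : ℕ) : ZMod (2^(m-1))) * ((q : ℕ) : ZMod (2^(m-1)))) := by
      intro q v hv
      rw [hg]
      simp only
      unfold Fz
      rw [Nat.mul_add_div hT, Nat.div_eq_of_lt hv, add_zero]
      congr 1
      push_cast [Nat.cast_sub (le_of_lt hm'lt)]
      ring
    have hsplit : ∀ Q : ℕ, ∑ u ∈ Finset.range (2^t * Q), g u
        = ∑ q ∈ Finset.range Q, ∑ v ∈ Finset.range (2^t), g (2^t * q + v) := by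
      intro Q
      induction Q with
      | zero => simp
      | succ Q ih =>
          have : 2^t * (Q + 1) = 2^t * Q + 2^t := by ring
          rw [this, Finset.sum_range_add, ih, Finset.sum_range_succ]
    have htot : ∑ u ∈ Finset.range (2^(m+t-1)), g u = 0 := by
      rw [hS, hsplit]
      have hswap : ∀ q ∈ Finset.range (2^(m-1)), ∑ v ∈ Finset.range (2^t), g (2^t * q + v)
          = ∑ v ∈ Finset.range (2^t), δ ((v : ZMod (2^(m-1)))
            + ((2^t - (m-1) : ℕ) : ZMod (2^(m-1))) * (q : ZMod (2^(m-1)))) := by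
        intro q _
        apply Finset.sum_congr rfl
        intro v hv
        exact hblock q v (Finset.mem_range.mp hv)
      rw [Finset.sum_congr rfl hswap, Finset.sum_comm]
      have hinner : ∀ v : ZMod (2^(m-1)) → ZMod 2, True := fun _ => trivial
      have hcol : ∀ v : ℕ, ∑ q ∈ Finset.range (2^(m-1)), δ ((v : ZMod (2^(m-1)))
            + ((2^t - (m-1) : ℕ) : ZMod (2^(m-1))) * (q : ZMod (2^(m-1))))
          = ∑ z : ZMod (2^(m-1)), δ z := by
        intro v
        rw [sum_range_zmod (fun z => δ ((v : ZMod (2^(m-1)))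
          + ((2^t - (m-1) : ℕ) : ZMod (2^(m-1))) * z))]
        set u : (ZMod (2^(m-1)))ˣ := ZMod.unitOfCoprime _ hcop with hu
        have hucoe : (u : ZMod (2^(m-1))) = ((2^t - (m-1) : ℕ) : ZMod (2^(m-1))) :=
          ZMod.coe_unitOfCoprime _ _
        have hbij : Function.Bijective (fun z : ZMod (2^(m-1)) => (u : ZMod (2^(m-1))) * z) := by
          constructor
          · intro a b hab
            exact (Units.mul_right_inj u).mp hab
          · intro z
            exact ⟨((u⁻¹ : (ZMod (2^(m-1)))ˣ) : ZMod (2^(m-1))) * z, Units.mul_inv_cancel_left u z⟩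
        rw [← hucoe]
        rw [Fintype.sum_bijective _ hbij
          (fun z => δ ((v : ZMod (2^(m-1))) + (u : ZMod (2^(m-1))) * z))
          (fun z => δ ((v : ZMod (2^(m-1))) + z)) (fun z => rfl)]
        exact sum_shift_zmod δ _
      rw [Finset.sum_congr rfl (fun v _ => hcol v), Finset.sum_const, Finset.card_range,
        nsmul_eq_mul]
      have : ((2^t : ℕ) : ZMod 2) = 0 := by
        push_cast
        rw [show (2 : ZMod 2) = 0 from rfl, zero_pow (by omega)]
      rw [this, zero_mul]
    have hgper : ∀ z : ℕ, g (z % 2^(m+t-1)) = g z := by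
      intro z
      rw [hg]
      simp only
      rw [Fz_mod hS]
    have hBper : ∀ z : ℕ, B (z + 2^(m+t-1)) = B z := by
      intro z
      rw [hB]
      simp only
      rw [Finset.sum_range_add]
      rw [sum_range_shift_nat g hgper z, htot, add_zero]
    have hBmul : ∀ z q : ℕ, B (z + 2^(m+t-1) * q) = B z := by
      intro z q
      induction q with
      | zero => simp
      | succ q ih =>
          have : z + 2^(m+t-1) * (q+1) = (z + 2^(m+t-1) * q) + 2^(m+t-1) := by ring
          rw [this, hBper, ih]
    have hBmod : ∀ z : ℕ, B (z % 2^(m+t-1)) = B z := by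
      intro z
      conv_rhs => rw [← Nat.mod_add_div z (2^(m+t-1))]
      rw [hBmul]
    set b : ZMod (2^(m+t-1)) → ZMod 2 := fun J => B J.val with hb
    have hbwin : ∀ (J : ZMod (2^(m+t-1))) (y : ℕ),
        b (J + (y : ZMod (2^(m+t-1)))) = B (J.val + y) := by
      intro J y
      rw [hb]
      simp only
      rw [val_add_natCast, hBmod]
    have hBstep : ∀ z : ℕ, B (z + 1) = B z + g z := fun z => Finset.sum_range_succ g z
    refine ⟨b, ?_⟩
    intro j0 p
    set d : Fin (m-1) → ZMod 2 := fun y =>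
      p ⟨y.val + 1, by have := y.is_lt; omega⟩ + p ⟨y.val, by have := y.is_lt; omega⟩ with hd
    obtain ⟨⟨J0, u0⟩, ⟨hc0, hw0⟩, hun⟩ := hcore j0 d
    simp only [add_zero] at hw0
    have hm0 : 0 < m := by omega
    set ε0 : ZMod 2 := B J0.val + p ⟨0, hm0⟩ with hε0
    have k3 : ∀ a b : ZMod 2, b + (a + b) = a := by decide
    have k4 : ∀ a b c : ZMod 2, (a + c) + (b + a) = b + c := by decide
    have k5 : ∀ a b c : ZMod 2, a = b + c → c = a + b := by decide
    have k6 : ∀ a b c : ZMod 2, (a + c) + (b + c) = a + b := by decide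
    have hclaim : ∀ (z : ℕ) (hz : z < m), B (J0.val + z) = p ⟨z, hz⟩ + ε0 := by
      intro z
      induction z with
      | zero =>
          intro hz
          rw [Nat.add_zero, hε0]
          exact (k3 _ _).symm
      | succ z ih =>
          intro hz
          have hz1 : z < m := by omega
          have hz2 : z < m - 1 := by omega
          have hstep2 : J0.val + (z + 1) = (J0.val + z) + 1 := by omega
          rw [hstep2, hBstep, ih hz1]
          have hgval : g (J0.val + z) = d ⟨z, hz2⟩ := hw0 ⟨z, hz2⟩
          rw [hgval]
          exact k4 (p ⟨z, hz1⟩) (p ⟨z + 1, hz⟩) ε0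
    refine ⟨⟨J0, ε0⟩, ⟨hc0, ?_⟩, ?_⟩
    · intro y
      rw [hbwin]
      have := hclaim y.val y.is_lt
      rwa [Fin.eta] at this
    · rintro ⟨J, ε⟩ ⟨hc, hw⟩
      have hdiffs : ∀ y : Fin (m-1), δ (Fz (2^(m-1)) t (m-1) (J.val + (y : ℕ))) = d y := by
        intro y
        have hy1 : y.val + 1 < m := by have := y.is_lt; omega
        have hy2 : y.val < m := by have := y.is_lt; omega
        have h1 : b (J + ((y.val + 1 : ℕ) : ZMod (2^(m+t-1)))) = p ⟨y.val + 1, hy1⟩ + ε :=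
          hw ⟨y.val + 1, hy1⟩
        have h2 : b (J + ((y.val : ℕ) : ZMod (2^(m+t-1)))) = p ⟨y.val, hy2⟩ + ε :=
          hw ⟨y.val, hy2⟩
        rw [hbwin] at h1 h2
        have hstep : B (J.val + (y.val + 1)) = B (J.val + y.val) + g (J.val + y.val) := by
          rw [show J.val + (y.val + 1) = (J.val + y.val) + 1 by omega]
          exact hBstep _
        rw [h1, h2] at hstep
        have h5 := k5 _ _ _ hstep
        show g (J.val + y.val) = d y
        rw [h5]
        exact k6 (p ⟨y.val + 1, hy1⟩) (p ⟨y.val, hy2⟩) ε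
      have hJeq : (J, ()) = (J0, u0) := hun (J, ()) ⟨hc, by
        intro y
        rw [add_zero]
        exact hdiffs y⟩
      have hJ : J = J0 := congrArg Prod.fst hJeq
      have hε : ε = ε0 := by
        have h0 : b (J + ((0 : ℕ) : ZMod (2^(m+t-1)))) = p ⟨0, hm0⟩ + ε := hw ⟨0, hm0⟩
        rw [hbwin, Nat.add_zero, hJ] at h0
        rw [hε0]
        exact k5 _ _ _ h0
      rw [hJ, hε]

theorem stmt_16 (k n t m Δ : ℕ) (hm : 3 ≤ m) (hmt : m < 2 ^ t) (hn : 2 ≤ n) (hnk : n < 2 ^ k)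
    (C : Fin Δ → (ZMod (2 ^ k) × ZMod (2 ^ t) → ZMod 2))
    (hC : IsDBAC (2 ^ k) (2 ^ t) n m Δ C)
    (hodd : ∀ c, ∀ j : ZMod (2 ^ t), Odd (colWeight (C c) j))
    (hhalf : ∃ s : ZMod (2 ^ (m - 1)) → ZMod 2, IsHalfDeBruijn m s) :
    ∃ C' : Fin Δ → (ZMod (2 ^ (k + 1)) × ZMod (2 ^ (m + t - 1)) → ZMod 2),
      IsDBAC (2 ^ (k + 1)) (2 ^ (m + t - 1)) (n + 1) m Δ C' := by
  classical
  obtain ⟨b, hb⟩ := exists_good_b m t hm hmt hhalf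
  haveI : NeZero (2^k) := ⟨(pow_pos (by norm_num) k).ne'⟩
  haveI : NeZero (2^(k+1)) := ⟨(pow_pos (by norm_num) (k+1)).ne'⟩
  haveI : NeZero (2^t) := ⟨(pow_pos (by norm_num) t).ne'⟩
  haveI : NeZero (2^(m+t-1)) := ⟨(pow_pos (by norm_num) (m+t-1)).ne'⟩
  have k7 : ∀ a : ZMod 2, a + 1 + 1 = a := by decide
  have k8 : ∀ s e v : ZMod 2, s + e + (v + s + e) = v := by decide
  have k9 : ∀ s bb a c : ZMod 2, s + bb = a → s + (c + a) + bb = c := by decide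
  have k10 : ∀ s cc bb u v : ZMod 2, s + cc + bb = u → s + bb = v → cc = u + v := by decide
  have k11 : ∀ s e bb v : ZMod 2, s + e + bb = v → bb = v + s + e := by decide
  -- column sums are 1
  have hcolsum : ∀ (c : Fin Δ) (j : ZMod (2^t)), ∑ z : ZMod (2^k), C c (z, j) = 1 := by
    intro c j
    rw [sum_eq_card_filter (fun z : ZMod (2^k) => C c (z, j))]
    have hw := hodd c j
    have hcw : colWeight (C c) j
        = (Finset.univ.filter (fun z : ZMod (2^k) => C c (z, j) = 1)).card := by
      rw [colWeight, Set.ncard_eq_toFinset_card']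
      congr 1
      ext z
      simp
    rw [hcw] at hw
    obtain ⟨w, hw2⟩ := hw
    rw [hw2]
    push_cast
    have h2 : (2 : ZMod 2) = 0 := by decide
    rw [h2]
    ring
  have hshift : ∀ (c : Fin Δ) (j : ZMod (2^t)) (z : ZMod (2^k)),
      ∑ u ∈ Finset.range (2^k), C c (z + (u : ZMod (2^k)), j) = 1 := by
    intro c j z
    exact (sum_range_shift (fun w => C c (w, j)) z).trans (hcolsum c j)
  -- vertical partial sums
  set Sm : Fin Δ → ℕ → ZMod (2^t) → ZMod 2 :=
    fun c a j => ∑ u ∈ Finset.range a, C c ((u : ZMod (2^k)), j) with hSm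
  have hSmstep : ∀ c a j, Sm c (a+1) j = Sm c a j + C c ((a : ZMod (2^k)), j) :=
    fun c a j => Finset.sum_range_succ _ a
  have hSmadd : ∀ c a j, Sm c (a + 2^k) j = Sm c a j + 1 := by
    intro c a j
    rw [hSm]
    simp only
    rw [Finset.sum_range_add]
    congr 1
    have hcongr : ∀ u ∈ Finset.range (2^k), C c (((a + u : ℕ) : ZMod (2^k)), j)
        = C c (((a : ℕ) : ZMod (2^k)) + (u : ZMod (2^k)), j) := by
      intro u _
      rw [Nat.cast_add]
    rw [Finset.sum_congr rfl hcongr]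
    exact hshift c j _
  have hSmR : ∀ c a j, Sm c (a + 2^(k+1)) j = Sm c a j := by
    intro c a j
    have hp2 : (2:ℕ)^(k+1) = 2^k * 2 := pow_succ 2 k
    have hsplit : a + 2^(k+1) = (a + 2^k) + 2^k := by omega
    rw [hsplit, hSmadd, hSmadd]
    exact k7 _
  have hSmmul : ∀ c a q j, Sm c (a + 2^(k+1) * q) j = Sm c a j := by
    intro c a q j
    induction q with
    | zero => simp
    | succ q ih =>
        have : a + 2^(k+1) * (q+1) = (a + 2^(k+1) * q) + 2^(k+1) := by ring
        rw [this, hSmR, ih]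
  have hSmmod : ∀ c a j, Sm c (a % 2^(k+1)) j = Sm c a j := by
    intro c a j
    conv_rhs => rw [← Nat.mod_add_div a (2^(k+1))]
    rw [hSmmul]
  have hSmeps : ∀ c a (e : ZMod 2) j, Sm c (a + e.val * 2^k) j = Sm c a j + e := by
    intro c a e j
    rcases zmod2_cases e with h | h <;> subst h
    · rw [ZMod.val_zero, zero_mul, Nat.add_zero, add_zero]
    · rw [ZMod.val_one, one_mul, hSmadd]
  -- the new code
  set C' : Fin Δ → (ZMod (2^(k+1)) × ZMod (2^(m+t-1)) → ZMod 2) :=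
    fun c z => Sm c z.1.val ((z.2.val : ZMod (2^t))) + b z.2 with hC'
  have hS : (2^(m+t-1) : ℕ) = 2^t * 2^(m-1) := by
    rw [← pow_add]
    congr 1
    omega
  have hS0 : ((2^(m+t-1) : ℕ) : ZMod (2^t)) = 0 := by
    rw [hS, Nat.cast_mul, ZMod.natCast_self, zero_mul]
  have hmodcast : ∀ x : ℕ, ((x % 2^(m+t-1) : ℕ) : ZMod (2^t)) = (x : ZMod (2^t)) := by
    intro x
    conv_rhs => rw [← Nat.mod_add_div x (2^(m+t-1))]
    rw [Nat.cast_add, Nat.cast_mul, hS0, zero_mul, add_zero]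
  have hScls : ∀ (J : ZMod (2^(m+t-1))) (y : ℕ),
      (((J + (y : ZMod (2^(m+t-1)))).val : ℕ) : ZMod (2^t))
        = ((J.val : ZMod (2^t))) + (y : ZMod (2^t)) := by
    intro J y
    rw [val_add_natCast, hmodcast, Nat.cast_add]
  have hwinlem : ∀ (c : Fin Δ) (i : ZMod (2^(k+1))) (J : ZMod (2^(m+t-1))) (x y : ℕ),
      C' c (i + (x : ZMod (2^(k+1))), J + (y : ZMod (2^(m+t-1))))
        = Sm c (i.val + x) (((J.val : ZMod (2^t))) + (y : ZMod (2^t)))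
          + b (J + (y : ZMod (2^(m+t-1)))) := by
    intro c i J x y
    rw [hC']
    simp only
    rw [hScls, val_add_natCast, hSmmod]
  refine ⟨C', ?_⟩
  intro M
  set D : Fin n → Fin m → ZMod 2 :=
    fun x y => M x.succ y + M x.castSucc y with hD
  obtain ⟨⟨c0, i0, j0⟩, hDw, hDu⟩ := hC D
  simp only at hDw
  set p : Fin m → ZMod 2 :=
    fun y => M ⟨0, Nat.succ_pos n⟩ y + Sm c0 i0.val (j0 + ((y : ℕ) : ZMod (2^t))) with hp
  obtain ⟨⟨J0, ε⟩, ⟨hJcls, hJwin⟩, hJu⟩ := hb j0 p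
  simp only at hJcls hJwin
  set i1 : ZMod (2^(k+1)) := ((i0.val + ε.val * 2^k : ℕ) : ZMod (2^(k+1))) with hi1
  have hεlt : ε.val < 2 := ZMod.val_lt ε
  have hi0lt : i0.val < 2^k := ZMod.val_lt i0
  have hi1val : i1.val = i0.val + ε.val * 2^k := by
    apply ZMod.val_natCast_of_lt
    have hp2 : (2:ℕ)^(k+1) = 2^k * 2 := pow_succ 2 k
    have he2 : ε.val = 0 ∨ ε.val = 1 := by omega
    rcases he2 with h | h <;> rw [h] <;> omega
  have h2k0 : ((2^k : ℕ) : ZMod (2^k)) = 0 := ZMod.natCast_self _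
  have hi1cast : ((i1.val : ℕ) : ZMod (2^k)) = i0 := by
    rw [hi1val, Nat.cast_add, Nat.cast_mul, h2k0, mul_zero, add_zero]
    exact ZMod.natCast_rightInverse i0
  have hrowcast : ∀ x : ℕ, (((i1.val + x : ℕ)) : ZMod (2^k)) = i0 + (x : ZMod (2^k)) := by
    intro x
    rw [Nat.cast_add, hi1cast]
  have hclaim : ∀ (x : ℕ) (hx : x < n + 1) (y : Fin m),
      Sm c0 (i1.val + x) (j0 + ((y : ℕ) : ZMod (2^t)))
        + b (J0 + ((y : ℕ) : ZMod (2^(m+t-1)))) = M ⟨x, hx⟩ y := by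
    intro x
    induction x with
    | zero =>
        intro hx y
        rw [Nat.add_zero, hi1val, hSmeps, hJwin y]
        exact k8 _ _ _
    | succ x ih =>
        intro hx y
        have hx1 : x < n + 1 := by omega
        have hxn : x < n := by omega
        have hstep3 : i1.val + (x+1) = (i1.val + x) + 1 := by omega
        rw [hstep3, hSmstep]
        have hCd : C c0 (((i1.val + x : ℕ) : ZMod (2^k)), j0 + ((y : ℕ) : ZMod (2^t)))
            = D ⟨x, hxn⟩ y := by
          rw [hrowcast]
          exact hDw ⟨x, hxn⟩ y
        rw [hCd]
        have hDval : D ⟨x, hxn⟩ y = M ⟨x+1, hx⟩ y + M ⟨x, hx1⟩ y := rfl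
        rw [hDval]
        exact k9 _ _ _ _ (ih hx1 y)
  refine ⟨⟨c0, i1, J0⟩, ?_, ?_⟩
  · intro x y
    show C' c0 (i1 + ((x : ℕ) : ZMod (2^(k+1))), J0 + ((y : ℕ) : ZMod (2^(m+t-1)))) = M x y
    rw [hwinlem, hJcls]
    have := hclaim x.val x.isLt y
    rwa [Fin.eta] at this
  · rintro ⟨c, i, J⟩ hW
    simp only at hW
    have hdiff : ∀ (x : Fin n) (y : Fin m),
        C c (((i.val : ℕ) : ZMod (2^k)) + ((x : ℕ) : ZMod (2^k)),
             ((J.val : ℕ) : ZMod (2^t)) + ((y : ℕ) : ZMod (2^t))) = D x y := by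
      intro x y
      have h1 : C' c (i + ((x.val + 1 : ℕ) : ZMod (2^(k+1))),
          J + ((y : ℕ) : ZMod (2^(m+t-1)))) = M x.succ y := hW x.succ y
      have h2 : C' c (i + ((x.val : ℕ) : ZMod (2^(k+1))),
          J + ((y : ℕ) : ZMod (2^(m+t-1)))) = M x.castSucc y := hW x.castSucc y
      rw [hwinlem] at h1 h2
      rw [show i.val + (x.val + 1) = (i.val + x.val) + 1 by omega, hSmstep] at h1
      have hcast2 : ((i.val + x.val : ℕ) : ZMod (2^k))
          = ((i.val : ℕ) : ZMod (2^k)) + ((x : ℕ) : ZMod (2^k)) := by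
        rw [Nat.cast_add]
      rw [hcast2] at h1
      have hDval2 : D x y = M x.succ y + M x.castSucc y := rfl
      rw [hDval2]
      exact k10 _ _ _ _ _ h1 h2
    have hDuniq := hDu (c, ((i.val : ℕ) : ZMod (2^k)), ((J.val : ℕ) : ZMod (2^t))) hdiff
    rw [Prod.mk.injEq, Prod.mk.injEq] at hDuniq
    obtain ⟨hceq, hieq, hJeq⟩ := hDuniq
    subst hceq
    have himod : i.val % 2^k = i0.val := by
      have := congrArg ZMod.val hieq
      rwa [ZMod.val_natCast] at this
    have hilt : i.val < 2^(k+1) := ZMod.val_lt i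
    have hidiv : i.val / 2^k < 2 := by
      apply Nat.div_lt_of_lt_mul
      have hp2 : (2:ℕ)^(k+1) = 2^k * 2 := pow_succ 2 k
      omega
    set e : ZMod 2 := ((i.val / 2^k : ℕ) : ZMod 2) with he
    have heval : e.val = i.val / 2^k := by
      rw [he]
      exact ZMod.val_natCast_of_lt hidiv
    have hival : i.val = i0.val + e.val * 2^k := by
      rw [heval]
      have hd := Nat.div_add_mod i.val (2^k)
      rw [himod] at hd
      have hcm : (i.val / 2^k) * 2^k = 2^k * (i.val / 2^k) := Nat.mul_comm _ _
      omega
    have htop : ∀ y : Fin m, b (J + ((y : ℕ) : ZMod (2^(m+t-1)))) = p y + e := by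
      intro y
      have h0 : C' c (i + ((0 : ℕ) : ZMod (2^(k+1))),
          J + ((y : ℕ) : ZMod (2^(m+t-1)))) = M ⟨0, Nat.succ_pos n⟩ y :=
        hW ⟨0, Nat.succ_pos n⟩ y
      rw [hwinlem, hJeq, Nat.add_zero, hival, hSmeps] at h0
      exact k11 _ _ _ _ h0
    have hJu2 := hJu (J, e) ⟨hJeq, htop⟩
    rw [Prod.mk.injEq] at hJu2
    obtain ⟨hJJ, hee⟩ := hJu2
    have hii : i = i1 := by
      apply ZMod.val_injective
      rw [hi1val, hival, hee]
    rw [hJJ, hii]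
end

section
/- Let k, n be integers with k ≥ 1 and k ≤ n < 2^k − 1. Then there exists a perfect factor PF(n, k) all of whose sequences have even weight. -/
def IsPF (n k Δ : ℕ) (F : Fin Δ → (ZMod (2 ^ k) → ZMod 2)) : Prop :=
  ∀ x : Fin n → ZMod 2,
    ∃! p : Fin Δ × ZMod (2 ^ k),
      ∀ i : Fin n, F p.1 (p.2 + (i : ℕ)) = x i

noncomputable def seqWeight {N : ℕ} (s : ZMod N → ZMod 2) : ℕ :=
  {i : ZMod N | s i = 1}.ncard

/-!
Let `D s = s(· + 1) + s` be the difference operator on binary sequences of length `2^k`.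
In characteristic two `D^(2^k - 1) s` is the constant `∑ s`, so a sequence with `D^c s = 1`
(linear complexity `c + 1`) has even weight when `c < 2^k - 1` and odd weight when
`c = 2^k - 1`.

Two lifts of perfect families raise the span by one and `c` by one. Lempel's lift replaces each
even-weight sequence by its two preimages under `D`; the odd lift replaces each odd-weight
sequence of length `N` by the preimage under `D` of the sequence read twice, which has length
`2N`. One odd lift followed by `r - 1` Lempel lifts turns an odd family `PF(m, k)` into a family
`PF(m + r, k + 1)` that is even for `r < 2^k` and odd for `r = 2^k`.

The seed is the de Bruijn sequence obtained from an m-sequence `tr(β ζ^x)` by inserting a zero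
after its run of `k - 1` zeros. Its length-`k` windows are the images of the `β ζ^x` under the
linear map `y ↦ (tr(y ζ^i))_{i<k}`, injective because the trace form is nondegenerate and the
`ζ^i` span the field, so they run through all nonzero `k`-tuples. The seed has the maximal
complexity `2^k - 1`, because it is `D` of the odd-weight sequence obtained from another
m-sequence by inserting a one after its run of `k` ones. Lifting the families `PF(k, k - 1)` and
`PF(2^(k-1) - 1, k - 1)` that this produces covers all spans `k < n ≤ 2^k - 2`.
-/

open Finset

namespace PerfectFactor

section Sequences

variable {N : ℕ}

theorem sum_range_natCast [NeZero N] {M : Type*} [AddCommMonoid M] (f : ZMod N → M) :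
    ∑ i ∈ range N, f i = ∑ x, f x :=
  sum_bij' (fun i _ => (i : ZMod N)) (fun x _ => x.val) (by simp) (by simp [ZMod.val_lt])
    (fun i hi => ZMod.val_cast_of_lt (mem_range.mp hi)) (by simp) (by simp)

theorem sum_range_add_natCast [NeZero N] {M : Type*} [AddCommMonoid M] (f : ZMod N → M)
    (x : ZMod N) : ∑ i ∈ range N, f (x + i) = ∑ y, f y := by
  rw [sum_range_natCast (fun y => f (x + y))]
  exact Fintype.sum_equiv (Equiv.addLeft x) _ _ fun _ => rfl

theorem even_seqWeight_iff [NeZero N] (s : ZMod N → ZMod 2) :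
    Even (seqWeight s) ↔ ∑ x, s x = 0 := by
  have hs : ∀ c : ZMod 2, c = if c = 1 then 1 else 0 := by decide
  rw [sum_congr rfl fun x _ => hs (s x), sum_boole, ZMod.natCast_eq_zero_iff_even, seqWeight,
    Set.ncard_eq_toFinset_card']
  simp

def diff (s : ZMod N → ZMod 2) : ZMod N → ZMod 2 := fun x => s (x + 1) + s x

def integral (s : ZMod N → ZMod 2) : ZMod N → ZMod 2 := fun x => ∑ j ∈ range x.val, s j

theorem sum_range_diff (t : ZMod N → ZMod 2) (x : ZMod N) (m : ℕ) :
    ∑ i ∈ range m, diff t (x + i) = t (x + m) + t x := by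
  have := sum_range_sub (fun i : ℕ => t (x + i)) m
  simp only [Nat.cast_add, Nat.cast_one, Nat.cast_zero, add_zero, CharTwo.sub_eq_add] at this
  simpa [diff, add_assoc] using this

theorem integral_add_one [NeZero N] {s : ZMod N → ZMod 2} (hs : ∑ x, s x = 0) (x : ZMod N) :
    integral s (x + 1) = integral s x + s x := by
  have hx : ((x.val : ℕ) : ZMod N) = x := ZMod.natCast_zmod_val x
  rcases (Nat.succ_le_of_lt x.val_lt).lt_or_eq with hlt | hN
  · have hv : (x + 1).val = x.val + 1 := by
      rw [← hx, ← Nat.cast_succ, ZMod.val_natCast_of_lt hlt, ZMod.val_natCast_of_lt x.val_lt]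
    rw [integral, integral, hv, sum_range_succ, hx]
  · have h0 : x + 1 = 0 := by rw [← hx, ← Nat.cast_succ, hN, ZMod.natCast_self]
    rw [← sum_range_natCast s] at hs
    nth_rw 1 [← hN] at hs
    rw [sum_range_succ, hx] at hs
    rw [h0, integral, integral, ZMod.val_zero, sum_range_zero, ← hs]

theorem diff_integral [NeZero N] {s : ZMod N → ZMod 2} (hs : ∑ x, s x = 0) :
    diff (integral s) = s := by
  funext x
  rw [diff, integral_add_one hs, add_comm, ← add_assoc, CharTwo.add_self_eq_zero, zero_add]

theorem diff_add_const (s : ZMod N → ZMod 2) (c : ZMod 2) :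
    diff (fun x => s x + c) = diff s := by
  funext x
  simp only [diff]
  rw [add_add_add_comm, CharTwo.add_self_eq_zero, add_zero]

theorem diff_iterate_two_pow (m : ℕ) (s : ZMod N → ZMod 2) (x : ZMod N) :
    diff^[2 ^ m] s x = s (x + (2 ^ m : ℕ)) + s x := by
  induction m generalizing s x with
  | zero => simp [diff]
  | succ m ih =>
    rw [pow_succ, mul_two, Function.iterate_add_apply, ih, ih, ih, Nat.cast_add, ← add_assoc x,
      add_assoc (s _), ← add_assoc (s (x + _)), CharTwo.add_self_eq_zero, zero_add]

theorem diff_iterate_two_pow_sub_one (m : ℕ) (s : ZMod N → ZMod 2) (x : ZMod N) :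
    diff^[2 ^ m - 1] s x = ∑ j ∈ range (2 ^ m), s (x + j) := by
  induction m generalizing s x with
  | zero => simp
  | succ m ih =>
    have h : 2 ^ (m + 1) - 1 = (2 ^ m - 1) + 2 ^ m := by
      have := Nat.one_le_two_pow (n := m); rw [pow_succ]; omega
    rw [h, Function.iterate_add_apply, ih, pow_succ, mul_two, sum_range_add, ← sum_add_distrib]
    refine sum_congr rfl fun j _ => ?_
    rw [diff_iterate_two_pow, add_comm, Nat.cast_add, add_right_comm, add_assoc x]

theorem diff_iterate_two_pow_sub_one_eq_sum (k : ℕ) (s : ZMod (2 ^ k) → ZMod 2) :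
    diff^[2 ^ k - 1] s = fun _ => ∑ x, s x := by
  funext x
  rw [diff_iterate_two_pow_sub_one, sum_range_add_natCast]

theorem diff_iterate_one (j : ℕ) : diff^[j + 1] (1 : ZMod N → ZMod 2) = 0 := by
  rw [Function.iterate_succ_apply]
  have h1 : diff (1 : ZMod N → ZMod 2) = 0 := funext fun _ => CharTwo.add_self_eq_zero 1
  have h0 : diff (0 : ZMod N → ZMod 2) = 0 := funext fun _ => add_zero 0
  rw [h1, Function.iterate_fixed h0]

variable {k c : ℕ} {s : ZMod (2 ^ k) → ZMod 2}

theorem sum_eq_zero_of_diff_iterate_eq_one (hs : diff^[c] s = 1) (hc : c + 2 ≤ 2 ^ k) :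
    ∑ x, s x = 0 := by
  obtain ⟨j, hj⟩ : ∃ j, 2 ^ k - 1 = (j + 1) + c := ⟨2 ^ k - 2 - c, by omega⟩
  have := diff_iterate_two_pow_sub_one_eq_sum k s
  rw [hj, Function.iterate_add_apply, hs, diff_iterate_one] at this
  exact (congrFun this 0).symm

theorem sum_eq_one_of_diff_iterate_eq_one (hs : diff^[2 ^ k - 1] s = 1) : ∑ x, s x = 1 := by
  rw [diff_iterate_two_pow_sub_one_eq_sum] at hs
  exact congrFun hs 0

end Sequences

section Families

variable {N n : ℕ} {ι κ : Type*}

def window (n : ℕ) (s : ZMod N → ZMod 2) (p : ZMod N) : Fin n → ZMod 2 :=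
  fun i => s (p + (i : ℕ))

def IsPerfectFamily (n : ℕ) (F : ι → ZMod N → ZMod 2) : Prop :=
  Function.Bijective fun p : ι × ZMod N => window n (F p.1) p.2

theorem isPF_iff {k Δ : ℕ} (F : Fin Δ → ZMod (2 ^ k) → ZMod 2) :
    IsPF n k Δ F ↔ IsPerfectFamily n F := by
  simp only [IsPerfectFamily, Function.bijective_iff_existsUnique, IsPF, window, funext_iff]

theorem window_diff_eq {s t : ZMod N → ZMod 2} {p q : ZMod N}
    (h : window (n + 1) s p = window (n + 1) t q) : window n (diff s) p = window n (diff t) q := by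
  funext i
  have h1 := congrFun h i.succ
  have h0 := congrFun h i.castSucc
  simp only [window, Fin.val_succ, Fin.val_castSucc, Nat.cast_succ, ← add_assoc] at h0 h1
  simp only [window, diff, h0, h1]

theorem window_zero_eq {s t : ZMod N → ZMod 2} {p q : ZMod N}
    (h : window (n + 1) s p = window (n + 1) t q) : s p = t q := by
  simpa [window] using congrFun h 0

variable {F : ι → ZMod N → ZMod 2}

theorem IsPerfectFamily.card_mul [Fintype ι] [NeZero N] (h : IsPerfectFamily n F) :
    Fintype.card ι * N = 2 ^ n := by
  simpa using Fintype.card_of_bijective h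

theorem IsPerfectFamily.of_injective [Fintype ι] [NeZero N] (hcard : Fintype.card ι * N = 2 ^ n)
    (hinj : Function.Injective fun p : ι × ZMod N => window n (F p.1) p.2) :
    IsPerfectFamily n F :=
  (Fintype.bijective_iff_injective_and_card _).mpr ⟨hinj, by simpa using hcard⟩

theorem IsPerfectFamily.comp_equiv (h : IsPerfectFamily n F) (e : κ ≃ ι) :
    IsPerfectFamily n (F ∘ e) :=
  h.comp (e.prodCongr (Equiv.refl _)).bijective

def evenLift (F : ι → ZMod N → ZMod 2) (a : ι × ZMod 2) : ZMod N → ZMod 2 :=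
  fun x => integral (F a.1) x + a.2

theorem diff_evenLift [NeZero N] (hF : ∀ a, ∑ x, F a x = 0) (a : ι × ZMod 2) :
    diff (evenLift F a) = F a.1 := by
  unfold evenLift
  rw [diff_add_const, diff_integral (hF a.1)]

theorem IsPerfectFamily.evenLift [Fintype ι] [NeZero N] (h : IsPerfectFamily n F)
    (hF : ∀ a, ∑ x, F a x = 0) : IsPerfectFamily (n + 1) (evenLift F) := by
  refine .of_injective (by rw [Fintype.card_prod, ZMod.card, mul_right_comm, h.card_mul,
    pow_succ]) ?_
  rintro ⟨⟨a, c⟩, p⟩ ⟨⟨b, c'⟩, q⟩ hw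
  have hd := window_diff_eq hw
  simp only [diff_evenLift hF] at hd
  obtain ⟨rfl, rfl⟩ := Prod.ext_iff.mp (h.injective (a₁ := (a, p)) (a₂ := (b, q)) hd)
  have h0 := window_zero_eq hw
  simp only [PerfectFactor.evenLift, add_right_inj] at h0
  rw [h0]

def reduce (N : ℕ) : ZMod (N * 2) →+* ZMod N := ZMod.castHom (dvd_mul_right N 2) (ZMod N)

theorem reduce_natCast (j : ℕ) : reduce N j = j := map_natCast _ j

theorem eq_or_eq_add_of_reduce_eq [NeZero N] {q q' : ZMod (N * 2)}
    (h : reduce N q = reduce N q') : q' = q ∨ q' = q + N := by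
  obtain ⟨r, rfl⟩ : ∃ r, q' = q + r := ⟨q' - q, by ring⟩
  rw [map_add, left_eq_add, ← ZMod.natCast_zmod_val r, reduce_natCast,
    ZMod.natCast_eq_zero_iff] at h
  obtain ⟨c, hc⟩ := h
  have hc2 : c < 2 := by
    have := r.val_lt
    rw [hc] at this
    exact lt_of_mul_lt_mul_left this (Nat.zero_le N)
  interval_cases c
  · left
    rw [mul_zero, ZMod.val_eq_zero] at hc
    rw [hc, add_zero]
  · right
    rw [mul_one] at hc
    rw [← ZMod.natCast_zmod_val r, hc]

theorem sum_comp_reduce [NeZero N] (f : ZMod N → ZMod 2) :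
    ∑ x : ZMod (N * 2), f (reduce N x) = 0 := by
  rw [← sum_range_natCast]
  simp only [reduce_natCast]
  rw [mul_two, sum_range_add]
  simp only [Nat.cast_add, ZMod.natCast_self, zero_add, CharTwo.add_self_eq_zero]

def oddLift (F : ι → ZMod N → ZMod 2) (a : ι) : ZMod (N * 2) → ZMod 2 :=
  integral fun x => F a (reduce N x)

theorem diff_oddLift [NeZero N] (a : ι) : diff (oddLift F a) = fun x => F a (reduce N x) :=
  diff_integral (sum_comp_reduce _)

theorem oddLift_add [NeZero N] (hF : ∀ a, ∑ x, F a x = 1) (a : ι) (x : ZMod (N * 2)) :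
    oddLift F a (x + N) = oddLift F a x + 1 := by
  have h := sum_range_diff (oddLift F a) x N
  simp only [diff_oddLift, map_add, reduce_natCast, sum_range_add_natCast (F a), hF] at h
  rw [h, add_comm (oddLift F a (x + N)), ← add_assoc, CharTwo.add_self_eq_zero, zero_add]

theorem IsPerfectFamily.oddLift [Fintype ι] [NeZero N] (h : IsPerfectFamily n F)
    (hF : ∀ a, ∑ x, F a x = 1) : IsPerfectFamily (n + 1) (oddLift F) := by
  refine .of_injective (by rw [← mul_assoc, h.card_mul, pow_succ]) ?_
  rintro ⟨a, q⟩ ⟨b, q'⟩ hw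
  have hd := window_diff_eq hw
  simp only [diff_oddLift] at hd
  have hd' : window n (F a) (reduce N q) = window n (F b) (reduce N q') := by
    funext i
    simpa only [window, map_add, reduce_natCast] using congrFun hd i
  obtain ⟨rfl, hq⟩ := Prod.ext_iff.mp (h.injective (a₁ := (a, _)) (a₂ := (b, _)) hd')
  rcases eq_or_eq_add_of_reduce_eq hq with rfl | rfl
  · rfl
  · have h0 := window_zero_eq hw
    rw [oddLift_add hF, left_eq_add] at h0
    exact absurd h0 one_ne_zero

theorem diff_iterate_oddLift {k : ℕ} {F : ι → ZMod (2 ^ k) → ZMod 2}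
    (hF : ∀ a, ∑ x, F a x = 1) (a : ι) : diff^[2 ^ k] (oddLift F a) = 1 := by
  funext x
  rw [diff_iterate_two_pow, oddLift_add hF, add_right_comm, CharTwo.add_self_eq_zero, zero_add,
    Pi.one_apply]

end Families

def HasPerfectFamily (n N : ℕ) (P : (ZMod N → ZMod 2) → Prop) : Prop :=
  ∃ (ι : Type) (_ : Fintype ι) (F : ι → ZMod N → ZMod 2), IsPerfectFamily n F ∧ ∀ a, P (F a)

namespace HasPerfectFamily

variable {N n m k : ℕ} {P Q : (ZMod N → ZMod 2) → Prop}

theorem mono (h : HasPerfectFamily n N P) (hPQ : ∀ s, P s → Q s) : HasPerfectFamily n N Q := by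
  obtain ⟨ι, _, F, hF, hP⟩ := h
  exact ⟨ι, inferInstance, F, hF, fun a => hPQ _ (hP a)⟩

theorem evenLift [NeZero N] (h : HasPerfectFamily n N P) (hP : ∀ s, P s → ∑ x, s x = 0) :
    HasPerfectFamily (n + 1) N fun t => P (diff t) := by
  obtain ⟨ι, _, F, hF, hPF⟩ := h
  have hsum a : ∑ x, F a x = 0 := hP _ (hPF a)
  exact ⟨ι × ZMod 2, inferInstance, PerfectFactor.evenLift F, hF.evenLift hsum,
    fun a => by dsimp only; rw [diff_evenLift hsum]; exact hPF a.1⟩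

theorem oddLift (h : HasPerfectFamily n (2 ^ k) fun s => ∑ x, s x = 1) :
    HasPerfectFamily (n + 1) (2 ^ (k + 1)) fun t => diff^[2 ^ k] t = 1 := by
  obtain ⟨ι, _, F, hF, hsum⟩ := h
  exact ⟨ι, inferInstance, PerfectFactor.oddLift F, hF.oddLift hsum, diff_iterate_oddLift hsum⟩

theorem extend (h : HasPerfectFamily m (2 ^ k) fun s => ∑ x, s x = 1) {r : ℕ} (hr : 1 ≤ r)
    (hrk : r ≤ 2 ^ k) :
    HasPerfectFamily (m + r) (2 ^ (k + 1)) fun t => diff^[2 ^ k + (r - 1)] t = 1 := by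
  induction r, hr using Nat.le_induction with
  | base => simpa using h.oddLift
  | succ r hr ih =>
    refine ((ih (by omega)).evenLift fun s hs => sum_eq_zero_of_diff_iterate_eq_one hs ?_).mono
      fun t ht => ?_
    · rw [pow_succ]; omega
    · rwa [← Function.iterate_succ_apply, show (2 ^ k + (r - 1)).succ = 2 ^ k + (r + 1 - 1) by
        omega] at ht

theorem extend_even (h : HasPerfectFamily m (2 ^ k) fun s => ∑ x, s x = 1) {r : ℕ} (hr : 1 ≤ r)
    (hrk : r < 2 ^ k) : HasPerfectFamily (m + r) (2 ^ (k + 1)) fun s => ∑ x, s x = 0 :=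
  (h.extend hr hrk.le).mono fun _ hs =>
    sum_eq_zero_of_diff_iterate_eq_one hs (by rw [pow_succ]; omega)

theorem extend_odd (h : HasPerfectFamily m (2 ^ k) fun s => ∑ x, s x = 1) :
    HasPerfectFamily (m + 2 ^ k) (2 ^ (k + 1)) fun s => ∑ x, s x = 1 :=
  (h.extend Nat.one_le_two_pow le_rfl).mono fun _ hs => sum_eq_one_of_diff_iterate_eq_one <| by
    rwa [show 2 ^ (k + 1) - 1 = 2 ^ k + (2 ^ k - 1) by rw [pow_succ]; omega]

end HasPerfectFamily

section MSequences

theorem eq_zero_of_trace_mul_pow_eq_zero {K L : Type*} [Field K] [Field L] [Algebra K L]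
    [FiniteDimensional K L] [Algebra.IsSeparable K L] {x : L} (hx : Algebra.adjoin K {x} = ⊤)
    {y : L} (hy : ∀ i < Module.finrank K L, Algebra.trace K L (y * x ^ i) = 0) : y = 0 := by
  refine (traceForm_nondegenerate K L).1 y fun z => ?_
  have hz : z ∈ Submodule.span K (Set.range fun i : Fin (minpoly K x).natDegree => x ^ (i : ℕ)) :=
    (IsIntegral.of_finite K x).mem_span_pow <| by
      obtain ⟨f, hf⟩ : z ∈ (Polynomial.aeval (R := K) x).range := by
        rw [← Algebra.adjoin_singleton_eq_range_aeval, hx]; trivial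
      exact ⟨f, hf.symm⟩
  have hspan : Submodule.span K (Set.range fun i : Fin (minpoly K x).natDegree => x ^ (i : ℕ)) ≤
      LinearMap.ker (Algebra.trace K L ∘ₗ LinearMap.mulLeft K y) :=
    Submodule.span_le.mpr <| by
      rintro _ ⟨i, rfl⟩
      exact hy i (i.2.trans_le (minpoly.natDegree_le x))
  simpa using hspan hz

variable {k : ℕ}

theorem exists_isPrimitiveRoot_galoisField (hk : k ≠ 0) :
    ∃ ζ : GaloisField 2 k, IsPrimitiveRoot ζ (2 ^ k - 1) := by
  obtain ⟨g, hg⟩ := IsCyclic.exists_ofOrder_eq_natCard (α := (GaloisField 2 k)ˣ)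
  refine ⟨g, ?_⟩
  rw [IsPrimitiveRoot.coe_units_iff, ← GaloisField.card 2 k hk, ← Nat.card_units, ← hg]
  exact IsPrimitiveRoot.orderOf g

variable {ζ : GaloisField 2 k}

theorem exists_pow_eq_of_ne_zero (hζ : IsPrimitiveRoot ζ (2 ^ k - 1)) (hk : k ≠ 0)
    {z : GaloisField 2 k} (hz : z ≠ 0) : ∃ i < 2 ^ k - 1, ζ ^ i = z := by
  have : NeZero (2 ^ k - 1) := ⟨by have := Nat.one_lt_two_pow hk; omega⟩
  refine hζ.eq_pow_of_pow_eq_one ?_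
  have h := pow_card_eq_one' (G := (GaloisField 2 k)ˣ) (x := Units.mk0 z hz)
  rw [Nat.card_units, GaloisField.card 2 k hk] at h
  simpa using congrArg Units.val h

theorem adjoin_eq_top (hζ : IsPrimitiveRoot ζ (2 ^ k - 1)) (hk : k ≠ 0) :
    Algebra.adjoin (ZMod 2) {ζ} = ⊤ := by
  refine Algebra.eq_top_iff.mpr fun z => ?_
  rcases eq_or_ne z 0 with rfl | hz
  · exact (Algebra.adjoin (ZMod 2) {ζ}).zero_mem
  · obtain ⟨i, -, rfl⟩ := exists_pow_eq_of_ne_zero hζ hk hz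
    exact (Algebra.adjoin (ZMod 2) {ζ}).pow_mem (Algebra.self_mem_adjoin_singleton _ ζ) i

noncomputable def traceWindow (ζ : GaloisField 2 k) :
    GaloisField 2 k →ₗ[ZMod 2] Fin k → ZMod 2 :=
  LinearMap.pi fun i => Algebra.trace (ZMod 2) _ ∘ₗ LinearMap.mulRight (ZMod 2) (ζ ^ (i : ℕ))

theorem traceWindow_apply (y : GaloisField 2 k) (i : Fin k) :
    traceWindow ζ y i = Algebra.trace (ZMod 2) _ (y * ζ ^ (i : ℕ)) := rfl

theorem bijective_traceWindow (hζ : IsPrimitiveRoot ζ (2 ^ k - 1)) (hk : k ≠ 0) :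
    Function.Bijective (traceWindow ζ) := by
  refine Function.Injective.bijective_of_nat_card_le ?_ ?_
  · refine (injective_iff_map_eq_zero _).mpr fun y hy => ?_
    refine eq_zero_of_trace_mul_pow_eq_zero (adjoin_eq_top hζ hk) fun i hi => ?_
    rw [GaloisField.finrank 2 hk] at hi
    exact congrFun hy ⟨i, hi⟩
  · simp [GaloisField.card 2 k hk]

noncomputable def mseq (ζ β : GaloisField 2 k) (x : ℕ) : ZMod 2 :=
  Algebra.trace (ZMod 2) _ (β * ζ ^ x)

theorem mseq_window (β : GaloisField 2 k) (p : ℕ) :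
    (fun i : Fin k => mseq ζ β (p + i)) = traceWindow ζ (β * ζ ^ p) := by
  funext i
  rw [mseq, traceWindow_apply, pow_add, mul_assoc]

theorem mseq_add_period (hζ : IsPrimitiveRoot ζ (2 ^ k - 1)) (β : GaloisField 2 k) (x : ℕ) :
    mseq ζ β (x + (2 ^ k - 1)) = mseq ζ β x := by
  rw [mseq, mseq, pow_add, hζ.pow_eq_one, mul_one]

theorem mseq_succ_add_mseq (β : GaloisField 2 k) (x : ℕ) :
    mseq ζ β (x + 1) + mseq ζ β x = mseq ζ (β * (ζ + 1)) x := by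
  rw [mseq, mseq, mseq, ← map_add]
  ring_nf

theorem sum_range_mseq (hζ : IsPrimitiveRoot ζ (2 ^ k - 1)) (hk : 2 ≤ k) (β : GaloisField 2 k) :
    ∑ x ∈ range (2 ^ k - 1), mseq ζ β x = 0 := by
  have : 1 < 2 ^ k - 1 := by
    have := Nat.pow_le_pow_right two_pos hk; omega
  simp only [mseq]
  rw [← map_sum, ← mul_sum, hζ.geom_sum_eq_zero this, mul_zero, map_zero]

theorem exists_mseq_window_eq (hζ : IsPrimitiveRoot ζ (2 ^ k - 1)) (hk : k ≠ 0)
    {β : GaloisField 2 k} (hβ : β ≠ 0) {y : Fin k → ZMod 2} (hy : y ≠ 0) :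
    ∃ p < 2 ^ k - 1, (fun i : Fin k => mseq ζ β (p + i)) = y := by
  obtain ⟨z, rfl⟩ := (bijective_traceWindow hζ hk).2 y
  have hz : z ≠ 0 := by rintro rfl; exact hy (map_zero _)
  obtain ⟨p, hp, hpz⟩ := exists_pow_eq_of_ne_zero hζ hk (div_ne_zero hz hβ)
  exact ⟨p, hp, by rw [mseq_window, hpz, mul_div_cancel₀ _ hβ]⟩

end MSequences

section DeBruijn

variable {k : ℕ}

def insertLast (k : ℕ) (c : ZMod 2) (a : ℕ → ZMod 2) : ZMod (2 ^ k) → ZMod 2 :=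
  fun x => if x.val = 2 ^ k - 1 then c else a x.val

variable (c : ZMod 2) {a : ℕ → ZMod 2}

theorem insertLast_natCast {x : ℕ} (hx : x < 2 ^ k) :
    insertLast k c a (x : ZMod (2 ^ k)) = if x = 2 ^ k - 1 then c else a x := by
  rw [insertLast, ZMod.val_natCast_of_lt hx]

theorem insertLast_natCast_of_le (hper : ∀ x, a (x + (2 ^ k - 1)) = a x) {x : ℕ}
    (h1 : 2 ^ k ≤ x) (h2 : x < 2 ^ k + (2 ^ k - 1)) :
    insertLast k c a (x : ZMod (2 ^ k)) = a (x - 1) := by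
  obtain ⟨y, rfl⟩ := Nat.exists_eq_add_of_le h1
  rw [Nat.cast_add, ZMod.natCast_self, zero_add, insertLast_natCast c (by omega),
    if_neg (by omega), ← hper, show y + (2 ^ k - 1) = 2 ^ k + y - 1 by omega]

theorem sum_insertLast : ∑ x, insertLast k c a x = ∑ i ∈ range (2 ^ k - 1), a i + c := by
  have hk := Nat.one_le_two_pow (n := k)
  rw [← sum_range_natCast, show range (2 ^ k) = range (2 ^ k - 1 + 1) by congr; omega,
    sum_range_succ, insertLast_natCast c (by omega), if_pos rfl]
  congr 1
  exact sum_congr rfl fun i hi => by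
    rw [insertLast_natCast c (by simp at hi; omega), if_neg (by simp at hi; omega)]

theorem diff_insertLast_one (h0 : a 0 = 1) (hlast : a (2 ^ k - 1) = 1) :
    diff (insertLast k 1 a) = insertLast k 0 fun x => a (x + 1) + a x := by
  funext x
  obtain ⟨x, hx, rfl⟩ : ∃ m : ℕ, m < 2 ^ k ∧ (m : ZMod (2 ^ k)) = x :=
    ⟨x.val, x.val_lt, ZMod.natCast_zmod_val x⟩
  rw [diff, ← Nat.cast_succ, insertLast_natCast 1 hx, insertLast_natCast 0 hx]
  rcases (Nat.succ_le_of_lt hx).lt_or_eq with h | h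
  · have hxM : x ≠ 2 ^ k - 1 := by omega
    rw [insertLast_natCast 1 h, if_neg hxM, if_neg hxM]
    split_ifs with h'
    · rw [Nat.succ_eq_add_one] at h'
      rw [h', hlast]
    · rfl
  · have h1 : insertLast k 1 a (0 : ZMod (2 ^ k)) = 1 := by
      simp [insertLast, h0]
    rw [h, ZMod.natCast_self, h1, if_pos (by omega), if_pos (by omega)]
    rfl

theorem isPerfectFamily_insertLast_zero (hper : ∀ x, a (x + (2 ^ k - 1)) = a x)
    (hrun : ∀ x, 2 ^ k - k ≤ x → x < 2 ^ k - 1 → a x = 0)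
    (hwin : ∀ y : Fin k → ZMod 2, y ≠ 0 → ∃ p < 2 ^ k - 1, (fun i : Fin k => a (p + i)) = y) :
    IsPerfectFamily k fun _ : Unit => insertLast k 0 a := by
  refine Function.Surjective.bijective_of_nat_card_le (fun y => ?_) (by simp)
  suffices ∃ p : ℕ, ∀ i : Fin k, insertLast k 0 a ((p + i : ℕ) : ZMod (2 ^ k)) = y i by
    obtain ⟨p, hp⟩ := this
    exact ⟨((), p), funext fun i => by simpa [window] using hp i⟩
  have hk : k < 2 ^ k := Nat.lt_two_pow_self
  rcases eq_or_ne y 0 with rfl | hy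
  · refine ⟨2 ^ k - k, fun i => ?_⟩
    rw [insertLast_natCast 0 (by omega)]
    split_ifs
    · rfl
    · exact hrun _ (by omega) (by omega)
  obtain ⟨q, hq, rfl⟩ := hwin y hy
  by_cases hqk : q + k ≤ 2 ^ k - 1
  · exact ⟨q, fun i => by rw [insertLast_natCast 0 (by omega), if_neg (by omega)]⟩
  -- the window of `a` at `q` overlaps its run of zeros, which the inserted zero lengthens by one
  refine ⟨q + 1, fun i => ?_⟩
  dsimp only
  rcases lt_or_ge (q + 1 + i) (2 ^ k) with hx | hx
  · rw [insertLast_natCast 0 hx, hrun (q + i) (by omega) (by omega)]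
    split_ifs
    · rfl
    · exact hrun _ (by omega) (by omega)
  · rw [insertLast_natCast_of_le 0 hper hx (by omega)]
    congr 1
    omega

theorem exists_deBruijn_diff_odd (hk : 2 ≤ k) :
    ∃ e : ZMod (2 ^ k) → ZMod 2, ∑ x, e x = 1 ∧ IsPerfectFamily k fun _ : Unit => diff e := by
  have hk0 : k ≠ 0 := by omega
  have hkk : k < 2 ^ k := Nat.lt_two_pow_self
  have hk4 : 2 ^ 2 ≤ 2 ^ k := Nat.pow_le_pow_right two_pos hk
  obtain ⟨ζ, hζ⟩ := exists_isPrimitiveRoot_galoisField hk0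
  have hζ1 : ζ + 1 ≠ 0 := fun h =>
    hζ.ne_one (by omega) (sub_eq_zero.mp (by rwa [CharTwo.sub_eq_add]))
  obtain ⟨δ, hδ⟩ := (bijective_traceWindow hζ hk0).2 1
  have hδ0 : δ ≠ 0 := by rintro rfl; simpa using congrFun hδ ⟨0, by omega⟩
  set γ := δ / ζ ^ (2 ^ k - k)
  have hγ : γ ≠ 0 := div_ne_zero hδ0 (pow_ne_zero _ (hζ.ne_zero (by omega)))
  set T := mseq ζ γ
  have hT : ∀ x, 2 ^ k - k ≤ x → x < 2 ^ k → T x = 1 := by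
    intro x h1 h2
    obtain ⟨i, rfl⟩ := Nat.exists_eq_add_of_le h1
    have := congrFun (mseq_window (ζ := ζ) γ (2 ^ k - k)) ⟨i, by omega⟩
    rwa [div_mul_cancel₀ _ (pow_ne_zero _ (hζ.ne_zero (by omega))), hδ] at this
  have hT0 : T 0 = 1 := by
    have h : T (0 + (2 ^ k - 1)) = T 0 := mseq_add_period hζ γ 0
    rw [← h, zero_add]
    exact hT _ (by omega) (by omega)
  set a := mseq ζ (γ * (ζ + 1))
  have ha : (fun x => T (x + 1) + T x) = a := funext (mseq_succ_add_mseq γ)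
  refine ⟨insertLast k 1 T, by rw [sum_insertLast, sum_range_mseq hζ hk, zero_add], ?_⟩
  rw [diff_insertLast_one hT0 (hT _ (by omega) (by omega)), ha]
  refine isPerfectFamily_insertLast_zero (mseq_add_period hζ _) (fun x h1 h2 => ?_)
    (fun y hy => exists_mseq_window_eq hζ hk0 (mul_ne_zero hγ hζ1) hy)
  rw [← ha]
  dsimp only
  rw [hT x h1 (by omega), hT (x + 1) (by omega) (by omega), CharTwo.add_self_eq_zero]

theorem hasPerfectFamily_deBruijn (hk : 2 ≤ k) :
    HasPerfectFamily k (2 ^ k) fun s => diff^[2 ^ k - 2] s = 1 := by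
  obtain ⟨e, he, hd⟩ := exists_deBruijn_diff_odd hk
  refine ⟨Unit, inferInstance, fun _ => diff e, hd, fun _ => ?_⟩
  have : 2 ^ 2 ≤ 2 ^ k := Nat.pow_le_pow_right two_pos hk
  dsimp only
  rw [← Function.iterate_succ_apply, show Nat.succ (2 ^ k - 2) = 2 ^ k - 1 by omega,
    diff_iterate_two_pow_sub_one_eq_sum, he]
  rfl

end DeBruijn

variable {k n : ℕ}

theorem hasPerfectFamily_self_even (hk : 2 ≤ k) :
    HasPerfectFamily k (2 ^ k) fun s => ∑ x, s x = 0 :=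
  (hasPerfectFamily_deBruijn hk).mono fun _ hs =>
    sum_eq_zero_of_diff_iterate_eq_one hs (by have := Nat.pow_le_pow_right two_pos hk; omega)

theorem hasPerfectFamily_succ_odd (hk : 2 ≤ k) :
    HasPerfectFamily (k + 1) (2 ^ k) fun s => ∑ x, s x = 1 :=
  ((hasPerfectFamily_deBruijn hk).evenLift fun _ hs =>
    sum_eq_zero_of_diff_iterate_eq_one hs (by have := Nat.pow_le_pow_right two_pos hk; omega)).mono
    fun _ hs => sum_eq_one_of_diff_iterate_eq_one <| by
      have : 2 ^ 2 ≤ 2 ^ k := Nat.pow_le_pow_right two_pos hk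
      rwa [← Function.iterate_succ_apply, show Nat.succ (2 ^ k - 2) = 2 ^ k - 1 by omega] at hs

theorem hasPerfectFamily_two_pow_sub_one_odd (hk : 2 ≤ k) :
    HasPerfectFamily (2 ^ k - 1) (2 ^ k) fun s => ∑ x, s x = 1 := by
  induction k, hk using Nat.le_induction with
  | base => exact hasPerfectFamily_succ_odd le_rfl
  | succ k hk ih =>
    have h := ih.extend_odd
    rwa [show 2 ^ k - 1 + 2 ^ k = 2 ^ (k + 1) - 1 by
      rw [pow_succ]; have := Nat.one_le_two_pow (n := k); omega] at h

theorem hasPerfectFamily_even (hkn : k ≤ n) (hn : n + 2 ≤ 2 ^ k) :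
    HasPerfectFamily n (2 ^ k) fun s => ∑ x, s x = 0 := by
  have hk : 2 ≤ k := by
    by_contra! h
    interval_cases k <;> omega
  rcases hkn.eq_or_lt with rfl | hlt
  · exact hasPerfectFamily_self_even hk
  obtain ⟨j, rfl⟩ : ∃ j, k = j + 1 := ⟨k - 1, by omega⟩
  have hj : 2 ≤ j := by
    by_contra! h
    interval_cases j <;> omega
  rw [pow_succ] at hn
  by_cases hnj : n < 2 ^ j
  · have h :=
      (hasPerfectFamily_succ_odd hj).extend_even (r := n - (j + 1)) (by omega) (by omega)
    rwa [show j + 1 + (n - (j + 1)) = n by omega] at h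
  · have h := (hasPerfectFamily_two_pow_sub_one_odd hj).extend_even (r := n + 1 - 2 ^ j)
      (by omega) (by omega)
    rwa [show 2 ^ j - 1 + (n + 1 - 2 ^ j) = n by omega] at h

end PerfectFactor

theorem stmt_18_general (k n : ℕ) (hkn : k ≤ n) (hn : n < 2 ^ k - 1) :
    ∃ F : Fin (2 ^ (n - k)) → (ZMod (2 ^ k) → ZMod 2),
      IsPF n k (2 ^ (n - k)) F ∧ ∀ a, Even (seqWeight (F a)) := by
  obtain ⟨ι, _, F, hF, hsum⟩ := PerfectFactor.hasPerfectFamily_even hkn (by omega)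
  have hcard : Fintype.card ι = 2 ^ (n - k) := by
    have h := hF.card_mul
    rw [← Nat.sub_add_cancel hkn, pow_add] at h
    exact Nat.eq_of_mul_eq_mul_right (Nat.two_pow_pos k) h
  let e := Fintype.equivFinOfCardEq hcard
  exact ⟨F ∘ e.symm, (PerfectFactor.isPF_iff _).mpr (hF.comp_equiv e.symm),
    fun a => (PerfectFactor.even_seqWeight_iff _).mpr (hsum _)⟩

theorem stmt_18 (k n : ℕ) (hk : 1 ≤ k) (hkn : k ≤ n) (hn : n < 2 ^ k - 1) :
    ∃ F : Fin (2 ^ (n - k)) → (ZMod (2 ^ k) → ZMod 2),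
      IsPF n k (2 ^ (n - k)) F ∧ ∀ a, Even (seqWeight (F a)) :=
  stmt_18_general k n hkn hn
end

section
/- Let k ≥ 2 and n = 2^k − 1. Then in every perfect factor PF(n, k) each sequence has odd weight; moreover such a perfect factor is unique in the following sense: the set of all cyclic shifts of the sequences of any PF(2^k − 1, k) equals the set of all binary cyclic sequences of length 2^k having odd weight. -/
lemma parity_eq {N : ℕ} [NeZero N] (s : ZMod N → ZMod 2) :
    Odd (seqWeight s) ↔ ∑ i, s i = 1 := by
  classical
  have h0 : seqWeight s = (Finset.univ.filter (fun i : ZMod N => s i = 1)).card := by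
    rw [seqWeight, Set.ncard_eq_toFinset_card']
    congr 1
    ext i
    simp
  have h1 : ∑ i, s i =
      ((Finset.univ.filter (fun i : ZMod N => s i = 1)).card : ZMod 2) := by
    rw [← Finset.sum_filter_of_ne (p := fun i : ZMod N => s i = 1)
        (fun x _ hx => (show ∀ y : ZMod 2, y ≠ 0 → y = 1 by decide) _ hx)]
    rw [Finset.sum_congr rfl (fun x hx => (Finset.mem_filter.mp hx).2), Finset.sum_const,
      nsmul_eq_mul, mul_one]
  rw [h0, h1, Nat.odd_iff, ← ZMod.natCast_mod _ 2]
  rcases Nat.mod_two_eq_zero_or_one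
      ((Finset.univ.filter (fun i : ZMod N => s i = 1)).card) with h | h <;>
    rw [h] <;> simp

lemma main_aux {N n Δ : ℕ} [NeZero N] (hn : n + 1 = N) (h2 : 2 ≤ N)
    (F : Fin Δ → ZMod N → ZMod 2)
    (hF : ∀ x : Fin n → ZMod 2, ∃! p : Fin Δ × ZMod N,
        ∀ i : Fin n, F p.1 (p.2 + (i : ℕ)) = x i)
    (t : ZMod N → ZMod 2) :
    (∃ a j, ∀ i, t i = F a (i + j)) ↔ (∑ i, t i) = 1 := by
  classical
  haveI : Fact (1 < N) := ⟨h2⟩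
  -- every position other than `p` is covered by the window starting at `p+1`
  have cover : ∀ p q : ZMod N, q ≠ p → ∃ i : Fin n, q = p + 1 + ((i : ℕ) : ZMod N) := by
    intro p q hqp
    have hnlt : (q - p - 1).val ≠ n := by
      intro h
      apply hqp
      have hval : (((q - p - 1).val : ℕ) : ZMod N) = q - p - 1 :=
        ZMod.natCast_zmod_val _
      have hneg : ((n : ℕ) : ZMod N) = -1 := by
        have := congrArg (Nat.cast : ℕ → ZMod N) hn
        push_cast at this
        rw [ZMod.natCast_self] at this
        exact eq_neg_of_add_eq_zero_left this
      rw [h, hneg] at hval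
      have : q - p = 0 := by linear_combination -hval
      have := sub_eq_zero.mp this
      exact this
    refine ⟨⟨(q - p - 1).val, by have := ZMod.val_lt (q - p - 1); omega⟩, ?_⟩
    have hval : (((q - p - 1).val : ℕ) : ZMod N) = q - p - 1 := ZMod.natCast_zmod_val _
    simp only [hval]
    ring
  -- positions in the window starting at `p+1` differ from `p`
  have notp : ∀ (p : ZMod N) (i : Fin n), p + 1 + ((i : ℕ) : ZMod N) ≠ p := by
    intro p i h
    have h1 : (((1 + (i : ℕ)) : ℕ) : ZMod N) = 0 := by
      push_cast
      linear_combination h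
    rw [ZMod.natCast_eq_zero_iff] at h1
    have hi := i.isLt
    have := Nat.le_of_dvd (by omega) h1
    omega
  have two_ne : ∀ y : ZMod 2, y + 1 ≠ y := by decide
  have two_eq : ∀ y z : ZMod 2, y ≠ z → y = z + 1 := by decide
  -- the key "edge" property: flipping one bit toggles membership
  have edge : ∀ (u : ZMod N → ZMod 2) (p : ZMod N),
      ((∃ a j, ∀ i, u i = F a (i + j)) ↔
        ¬ (∃ a j, ∀ i, Function.update u p (u p + 1) i = F a (i + j))) := by
    intro u p
    set v := Function.update u p (u p + 1) with hvdef
    have hvp : v p = u p + 1 := Function.update_self _ _ _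
    have hvq : ∀ q, q ≠ p → v q = u q := fun q hq => Function.update_of_ne hq _ _
    constructor
    · rintro ⟨a, j, ha⟩ ⟨b, m, hb⟩
      have hx := hF (fun i : Fin n => u (p + 1 + ((i : ℕ) : ZMod N)))
      have h1 : ∀ i : Fin n, F a ((p + 1 + j) + ((i : ℕ) : ZMod N))
          = u (p + 1 + ((i : ℕ) : ZMod N)) := by
        intro i
        rw [ha (p + 1 + ((i : ℕ) : ZMod N))]
        congr 1
        ring
      have h2 : ∀ i : Fin n, F b ((p + 1 + m) + ((i : ℕ) : ZMod N))
          = u (p + 1 + ((i : ℕ) : ZMod N)) := by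
        intro i
        rw [← hvq _ (notp p i), hb (p + 1 + ((i : ℕ) : ZMod N))]
        congr 1
        ring
      have huniq := hx.unique (y₁ := (a, p + 1 + j)) (y₂ := (b, p + 1 + m)) h1 h2
      have hab : a = b := congrArg Prod.fst huniq
      have hjm : j = m := by
        have := congrArg Prod.snd huniq
        simp only at this
        exact add_left_cancel this
      apply two_ne (u p)
      rw [← hvp, hb p, ← hab, ← hjm, ← ha p]
    · intro hnv
      obtain ⟨⟨b, m⟩, hbm, -⟩ := hF (fun i : Fin n => u (p + 1 + ((i : ℕ) : ZMod N)))
      simp only at hbm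
      -- the candidate sequence
      have hrest : ∀ q, q ≠ p → u q = F b (q + (m - (p + 1))) := by
        intro q hq
        obtain ⟨i, hi⟩ := cover p q hq
        rw [hi]
        have := hbm i
        rw [← this]
        congr 1
        ring
      by_contra hnu
      apply hnv
      refine ⟨b, m - (p + 1), ?_⟩
      intro q
      by_cases hq : q = p
      · subst hq
        rw [hvp]
        have hcne : F b (q + (m - (q + 1))) ≠ u q := by
          intro hc
          exact hnu ⟨b, m - (q + 1), fun r => by
            by_cases hr : r = q
            · subst hr; exact hc.symm
            · exact hrest r hr⟩
        exact (two_eq _ _ hcne).symm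
      · rw [hvq q hq]
        exact hrest q hq
  -- the zero sequence is not of the given form
  have hzero : ¬ (∃ a j, ∀ i : ZMod N, (0 : ZMod 2) = F a (i + j)) := by
    rintro ⟨a, j, ha⟩
    have hall : ∀ q, F a q = 0 := by
      intro q
      have := ha (q - j)
      rw [sub_add_cancel] at this
      exact this.symm
    have hx := hF (fun _ : Fin n => (0 : ZMod 2))
    have huniq := hx.unique (y₁ := ((a, (0 : ZMod N)) : Fin Δ × ZMod N))
      (y₂ := (a, (1 : ZMod N))) (fun i => hall _) (fun i => hall _)
    have h01 : (0 : ZMod N) = 1 := congrArg Prod.snd huniq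
    exact zero_ne_one h01
  -- main claim by induction on the support
  have main : ∀ (D : Finset (ZMod N)) (t : ZMod N → ZMod 2),
      (∀ q, t q ≠ 0 → q ∈ D) →
      ((∃ a j, ∀ i, t i = F a (i + j)) ↔ ∑ i, t i = 1) := by
    intro D
    induction D using Finset.induction_on with
    | empty =>
      intro t ht
      have ht0 : ∀ q, t q = 0 := by
        intro q
        by_contra h
        exact absurd (ht q h) (Finset.notMem_empty q)
      constructor
      · rintro ⟨a, j, ha⟩
        exfalso
        exact hzero ⟨a, j, fun i => by rw [← ht0 i]; exact ha i⟩
      · intro hs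
        exfalso
        have : ∑ i, t i = 0 := Finset.sum_eq_zero (fun i _ => ht0 i)
        rw [this] at hs
        exact one_ne_zero hs.symm
    | @insert p D hp IH =>
      intro t ht
      by_cases htp : t p = 0
      · apply IH
        intro q hq
        rcases Finset.mem_insert.mp (ht q hq) with h | h
        · exact absurd (h ▸ htp) hq
        · exact h
      · have htp1 : t p = 1 := two_eq _ _ htp ▸ by rw [zero_add]
        set t' := Function.update t p 0 with ht'def
        have ht'p : t' p = 0 := Function.update_self _ _ _
        have ht'q : ∀ q, q ≠ p → t' q = t q := fun q hq => Function.update_of_ne hq _ _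
        have hteq : t = Function.update t' p (t' p + 1) := by
          funext q
          by_cases hq : q = p
          · subst hq
            rw [Function.update_self, ht'p, zero_add, htp1]
          · rw [Function.update_of_ne hq, ht'q q hq]
        have hIH := IH t' (fun q hq => by
          by_cases hqp : q = p
          · exact absurd (hqp ▸ ht'p) hq
          · rcases Finset.mem_insert.mp (ht q (by rwa [← ht'q q hqp])) with h | h
            · exact absurd h hqp
            · exact h)
        have hedge := edge t' p
        have hsum : ∑ i, t i = ∑ i, t' i + 1 := by
          rw [hteq, Finset.sum_update_of_mem (Finset.mem_univ p),
            Finset.sum_eq_sum_sdiff_singleton_add (Finset.mem_univ p) t', ht'p]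
          ring
        rw [hsum]
        constructor
        · intro hmem
          have : ¬ (∃ a j, ∀ i, t' i = F a (i + j)) := by
            intro h
            exact (hedge.mp h) (hteq ▸ hmem)
          have h0 : ∑ i, t' i ≠ 1 := fun h => this (hIH.mpr h)
          have : ∑ i, t' i = 0 := by
            rcases (show ∀ y : ZMod 2, y ≠ 1 → y = 0 by decide) _ h0 with h
            exact h
          rw [this, zero_add]
        · intro hsum1
          have h0 : ∑ i, t' i = 0 := by
            have : ∑ i, t' i ≠ 1 := by
              intro h
              rw [h] at hsum1
              exact absurd hsum1 (by decide)
            rcases (show ∀ y : ZMod 2, y ≠ 1 → y = 0 by decide) _ this with h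
            exact h
          have : ¬ (∃ a j, ∀ i, t' i = F a (i + j)) := fun h => by
            rw [hIH] at h
            rw [h] at h0
            exact absurd h0 (by decide)
          have := (not_iff_not.mpr hedge).mp this
          rw [not_not] at this
          exact hteq ▸ this
  exact main Finset.univ t (fun q _ => Finset.mem_univ q)

theorem stmt_19 (k : ℕ) (hk : 2 ≤ k)
    (F : Fin (2 ^ (2 ^ k - 1 - k)) → (ZMod (2 ^ k) → ZMod 2))
    (hF : IsPF (2 ^ k - 1) k (2 ^ (2 ^ k - 1 - k)) F) :
    (∀ a, Odd (seqWeight (F a))) ∧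
    {t : ZMod (2 ^ k) → ZMod 2 |
        ∃ (a : Fin (2 ^ (2 ^ k - 1 - k))) (j : ZMod (2 ^ k)), ∀ i, t i = F a (i + j)} =
      {t : ZMod (2 ^ k) → ZMod 2 | Odd (seqWeight t)} := by
  have h4 : 4 ≤ 2 ^ k := by
    calc (4 : ℕ) = 2 ^ 2 := by norm_num
    _ ≤ 2 ^ k := Nat.pow_le_pow_right (by norm_num) hk
  haveI : NeZero (2 ^ k) := ⟨by omega⟩
  have key := main_aux (N := 2 ^ k) (n := 2 ^ k - 1) (Δ := 2 ^ (2 ^ k - 1 - k))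
    (by omega) (by omega) F hF
  constructor
  · intro a
    rw [parity_eq]
    exact (key (F a)).mp ⟨a, 0, fun i => by rw [add_zero]⟩
  · ext t
    simp only [Set.mem_setOf_eq]
    rw [parity_eq, ← key t]
end
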